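/- Under randomization of Z, the homogeneous-direct-effect model, and monotonicity Y₀ ≤ Y₁ (in the r-argument): for z = 1, E-level identity P(R₁ = 1, Y₀ = 0, Y₁ = 0) = P(R = 1, Y = 0 | Z = 1) + η·P(R = 1 | Z = 1), where potential outcomes now satisfy E[Y(1, r)] = E[Y(0, r)] + η. -/
import Mathlib


open Finset
open scoped Classical

namespace PS

/-- Probability of an event `A` under weight function `p` on a finite sample space. -/
noncomputable def Prob {Ω : Type*} [Fintype Ω] (p : Ω → ℝ) (A : Ω → Prop) : ℝ :=
  ∑ ω ∈ Finset.univ.filter A, p ω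

/-- Conditional probability `P(A | B)`. -/
noncomputable def CProb {Ω : Type*} [Fintype Ω] (p : Ω → ℝ) (A B : Ω → Prop) : ℝ :=
  Prob p (fun ω => A ω ∧ B ω) / Prob p B

/-- Conditional expectation `E[f | B]`. -/
noncomputable def CExp {Ω : Type*} [Fintype Ω] (p : Ω → ℝ) (f : Ω → ℝ) (B : Ω → Prop) : ℝ :=
  (∑ ω ∈ Finset.univ.filter B, p ω * f ω) / Prob p B

/-- Indicator of a Boolean value, as a real number. -/
def ind (b : Bool) : ℝ := if b then 1 else 0

/-- Observed recommendation `R = R_Z`. -/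
def obsR {Ω : Type*} (Z R₀ R₁ : Ω → Bool) (ω : Ω) : Bool := if Z ω then R₁ ω else R₀ ω

/-- Observed outcome `Y = Y_R` (exclusion restriction). -/
def obsY {Ω : Type*} (Rv Y₀ Y₁ : Ω → Bool) (ω : Ω) : Bool := if Rv ω then Y₁ ω else Y₀ ω

/-- `Z` is independent of the vector `(R₀, R₁, Y₀, Y₁)`. -/
def IndepZ {Ω : Type*} [Fintype Ω] (p : Ω → ℝ) (Z R₀ R₁ Y₀ Y₁ : Ω → Bool) : Prop :=
  ∀ z a b c d : Bool,
    Prob p (fun ω => Z ω = z ∧ R₀ ω = a ∧ R₁ ω = b ∧ Y₀ ω = c ∧ Y₁ ω = d) =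
      Prob p (fun ω => Z ω = z) *
        Prob p (fun ω => R₀ ω = a ∧ R₁ ω = b ∧ Y₀ ω = c ∧ Y₁ ω = d)

/-- `Z` is independent of `(R₀, R₁)` and all the potential outcomes `Y(z, r)`. -/
def IndepZ' {Ω : Type*} [Fintype Ω] (p : Ω → ℝ) (Z R₀ R₁ : Ω → Bool)
    (W : Bool → Bool → Ω → Bool) : Prop :=
  ∀ (z : Bool) (A : Ω → Prop),
    (∃ S : Bool → Bool → Bool → Bool → Bool → Bool → Prop,
        ∀ ω, A ω ↔ S (R₀ ω) (R₁ ω) (W false false ω) (W false true ω)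
          (W true false ω) (W true true ω)) →
    Prob p (fun ω => Z ω = z ∧ A ω) = Prob p (fun ω => Z ω = z) * Prob p A

/-- Homogeneous additive direct effect of `Z` on `Y`:
`P(Y(1,r)=1, A) = P(Y(0,r)=1, A) + η·P(A)` for events `A` determined by `(R₀, R₁, Y(0,·))`. -/
def Homog {Ω : Type*} [Fintype Ω] (p : Ω → ℝ) (R₀ R₁ : Ω → Bool)
    (W : Bool → Bool → Ω → Bool) (η : ℝ) : Prop :=
  ∀ (r : Bool) (A : Ω → Prop),
    (∃ S : Bool → Bool → Bool → Bool → Prop,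
        ∀ ω, A ω ↔ S (R₀ ω) (R₁ ω) (W false false ω) (W false true ω)) →
    Prob p (fun ω => W true r ω = true ∧ A ω) =
      Prob p (fun ω => W false r ω = true ∧ A ω) + η * Prob p A

lemma Prob_congr {Ω : Type*} [Fintype Ω] (p : Ω → ℝ) {A B : Ω → Prop}
    (h : ∀ ω, A ω ↔ B ω) : Prob p A = Prob p B := by
  unfold Prob
  congr 1
  ext ω
  simp [h ω]

lemma Prob_split {Ω : Type*} [Fintype Ω] (p : Ω → ℝ) (A B : Ω → Prop) :
    Prob p A = Prob p (fun ω => A ω ∧ B ω) + Prob p (fun ω => A ω ∧ ¬ B ω) := by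
  unfold Prob
  rw [← Finset.sum_filter_add_sum_filter_not (Finset.univ.filter A) B p]
  congr 1 <;> · · congr 1; ext ω; simp

theorem stmt13 {Ω : Type*} [Fintype Ω] (p : Ω → ℝ) (Z R₀ R₁ : Ω → Bool)
    (W : Bool → Bool → Ω → Bool) (η : ℝ)
    (hp : ∀ ω, 0 ≤ p ω) (hsum : ∑ ω, p ω = 1)
    (hZpos : ∀ z : Bool, 0 < Prob p (fun ω => Z ω = z))
    (hindep : IndepZ' p Z R₀ R₁ W)
    (hhom : Homog p R₀ R₁ W η)
    (hmono : ∀ (z : Bool) (ω : Ω), W z false ω = true → W z true ω = true) :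
    Prob p (fun ω => R₁ ω = true ∧ W false false ω = false ∧ W false true ω = false) =
      CProb p
          (fun ω => obsR Z R₀ R₁ ω = true ∧ W (Z ω) (obsR Z R₀ R₁ ω) ω = false)
          (fun ω => Z ω = true) +
        η * CProb p (fun ω => obsR Z R₀ R₁ ω = true) (fun ω => Z ω = true) := by
  have hPZ : Prob p (fun ω => Z ω = true) ≠ 0 := ne_of_gt (hZpos true)
  -- First CProb numerator
  have e1 : Prob p (fun ω => (obsR Z R₀ R₁ ω = true ∧ W (Z ω) (obsR Z R₀ R₁ ω) ω = false)
      ∧ Z ω = true) =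
      Prob p (fun ω => Z ω = true ∧ (R₁ ω = true ∧ W true true ω = false)) := by
    apply Prob_congr
    intro ω
    cases hz : Z ω <;> simp [obsR, hz] <;> tauto
  have i1 := hindep true (fun ω => R₁ ω = true ∧ W true true ω = false)
    ⟨fun a b c d e f => b = true ∧ f = false, fun ω => Iff.rfl⟩
  have e2 : Prob p (fun ω => obsR Z R₀ R₁ ω = true ∧ Z ω = true) =
      Prob p (fun ω => Z ω = true ∧ R₁ ω = true) := by
    apply Prob_congr
    intro ω
    cases hz : Z ω <;> simp [obsR, hz]
  have i2 := hindep true (fun ω => R₁ ω = true)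
    ⟨fun a b c d e f => b = true, fun ω => Iff.rfl⟩
  have c1 : CProb p
      (fun ω => obsR Z R₀ R₁ ω = true ∧ W (Z ω) (obsR Z R₀ R₁ ω) ω = false)
      (fun ω => Z ω = true) = Prob p (fun ω => R₁ ω = true ∧ W true true ω = false) := by
    unfold CProb
    rw [e1, i1]; field_simp
  have c2 : CProb p (fun ω => obsR Z R₀ R₁ ω = true) (fun ω => Z ω = true) =
      Prob p (fun ω => R₁ ω = true) := by
    unfold CProb
    rw [e2, i2]; field_simp
  rw [c1, c2]
  -- Homogeneity with A = (R₁ = true)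
  have hh := hhom true (fun ω => R₁ ω = true)
    ⟨fun a b c d => b = true, fun ω => Iff.rfl⟩
  -- splits
  have s1 : Prob p (fun ω => R₁ ω = true) =
      Prob p (fun ω => W true true ω = true ∧ R₁ ω = true) +
      Prob p (fun ω => R₁ ω = true ∧ W true true ω = false) := by
    rw [Prob_split p (fun ω => R₁ ω = true) (fun ω => W true true ω = true)]
    congr 1
    · exact Prob_congr p (fun ω => by tauto)
    · exact Prob_congr p (fun ω => by simp)
  have s2 : Prob p (fun ω => R₁ ω = true) =
      Prob p (fun ω => W false true ω = true ∧ R₁ ω = true) +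
      Prob p (fun ω => R₁ ω = true ∧ W false true ω = false) := by
    rw [Prob_split p (fun ω => R₁ ω = true) (fun ω => W false true ω = true)]
    congr 1
    · exact Prob_congr p (fun ω => by tauto)
    · exact Prob_congr p (fun ω => by simp)
  -- LHS via monotonicity
  have lhs_eq : Prob p (fun ω => R₁ ω = true ∧ W false false ω = false ∧ W false true ω = false)
      = Prob p (fun ω => R₁ ω = true ∧ W false true ω = false) := by
    apply Prob_congr
    intro ω
    constructor
    · rintro ⟨h1, _, h3⟩; exact ⟨h1, h3⟩
    · rintro ⟨h1, h3⟩
      refine ⟨h1, ?_, h3⟩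
      cases h0 : W false false ω
      · rfl
      · exact absurd (hmono false ω h0) (by simp [h3])
  rw [lhs_eq]
  linarith [hh, s1, s2]

end PS
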